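/- arXiv:2509.04289 — 2 statements merged into one kernel-verified Lean document; each statement's English description precedes it below -/
import Mathlib

section
/- Let δ ∈ (0,1) and define 𝑃̃ = { k ∈ ℕ : |∫₀^δ sin(kπt) dt| < δ²/(32πk) }. Then limsup_{r→∞} |𝑃̃ ∩ (0,r)|/r ≤ δ/2. -/
open MeasureTheory Filter

/-- The upper density of a set `S ⊆ ℕ`: `limsup_{r→∞} |S ∩ (0,r)| / r`. -/
noncomputable def upperDensity (S : Set ℕ) : ℝ :=
  Filter.limsup (fun r : ℝ =>
    (Nat.card {k : ℕ | k ∈ S ∧ 0 < (k : ℝ) ∧ (k : ℝ) < r} : ℝ) / r) Filter.atTop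

private lemma key_round (δ : ℝ) (hδ0 : 0 < δ) (hδ1 : δ < 1) (k : ℕ) (hk : 0 < k)
    (h : |∫ t in (0:ℝ)..δ, Real.sin (k * Real.pi * t)| < δ ^ 2 / (32 * Real.pi * k)) :
    |(k:ℝ) * δ / 2 - round ((k:ℝ) * δ / 2)| < δ / 16 := by
  have hπ := Real.pi_pos
  have hk0 : (0:ℝ) < k := by exact_mod_cast hk
  have hc : ((k:ℝ) * Real.pi) ≠ 0 := by positivity
  set x : ℝ := (k:ℝ) * δ / 2 with hxdef
  -- compute the integral
  have hint : (∫ t in (0:ℝ)..δ, Real.sin ((k:ℝ) * Real.pi * t))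
      = ((k:ℝ) * Real.pi)⁻¹ * (1 - Real.cos ((k:ℝ) * Real.pi * δ)) := by
    rw [intervalIntegral.integral_comp_mul_left Real.sin hc, integral_sin]
    simp
  have hcosle : Real.cos ((k:ℝ) * Real.pi * δ) ≤ 1 := Real.cos_le_one _
  have habs : |∫ t in (0:ℝ)..δ, Real.sin ((k:ℝ) * Real.pi * t)|
      = ((k:ℝ) * Real.pi)⁻¹ * (1 - Real.cos ((k:ℝ) * Real.pi * δ)) := by
    rw [hint, abs_of_nonneg]
    have : (0:ℝ) < ((k:ℝ) * Real.pi)⁻¹ := by positivity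
    nlinarith
  rw [habs] at h
  -- deduce 1 - cos < δ²/32
  have h2 : 1 - Real.cos ((k:ℝ) * Real.pi * δ) < δ ^ 2 / 32 := by
    have h3 := mul_lt_mul_of_pos_left h (by positivity : (0:ℝ) < (k:ℝ) * Real.pi)
    have e1 : (k:ℝ) * Real.pi * (((k:ℝ) * Real.pi)⁻¹ * (1 - Real.cos ((k:ℝ) * Real.pi * δ)))
        = 1 - Real.cos ((k:ℝ) * Real.pi * δ) := by
      field_simp
    have e2 : (k:ℝ) * Real.pi * (δ ^ 2 / (32 * Real.pi * (k:ℝ))) = δ ^ 2 / 32 := by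
      field_simp
    rw [e1, e2] at h3
    exact h3
  -- rewrite via half-angle
  have hcos2 : Real.cos ((k:ℝ) * Real.pi * δ) = 1 - 2 * Real.sin (Real.pi * x) ^ 2 := by
    have e : (k:ℝ) * Real.pi * δ = 2 * (Real.pi * x) := by rw [hxdef]; ring
    rw [e, Real.cos_two_mul']
    nlinarith [Real.sin_sq_add_cos_sq (Real.pi * x)]
  have hsin2 : Real.sin (Real.pi * x) ^ 2 < (δ / 8) ^ 2 := by nlinarith
  have hsin : |Real.sin (Real.pi * x)| < δ / 8 := by
    refine lt_of_pow_lt_pow_left₀ 2 (by positivity) ?_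
    rwa [sq_abs]
  -- reduce to fractional part
  set m : ℤ := round x with hm
  set y : ℝ := x - m with hy
  have hyhalf : |y| ≤ 1 / 2 := abs_sub_round x
  have hsy : Real.sin (Real.pi * x) = (-1) ^ m * Real.sin (Real.pi * y) := by
    have e : Real.pi * x = Real.pi * y + (m:ℝ) * Real.pi := by rw [hy]; ring
    rw [e, Real.sin_add_int_mul_pi]
  have habs1 : |((-1:ℝ)) ^ m| = 1 := by
    rcases Int.even_or_odd m with he | ho
    · rw [he.neg_one_zpow, abs_one]
    · rw [ho.neg_one_zpow, abs_neg, abs_one]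
  have habs2 : |Real.sin (Real.pi * y)| < δ / 8 := by
    rw [hsy, abs_mul, habs1, one_mul] at hsin
    exact hsin
  -- Jordan's inequality
  have hjab : |Real.pi * y| ≤ Real.pi / 2 := by
    rw [abs_mul, abs_of_pos hπ]
    nlinarith [hyhalf]
  have hj := Real.mul_abs_le_abs_sin hjab
  have hj2 : 2 * |y| ≤ |Real.sin (Real.pi * y)| := by
    have e : 2 / Real.pi * |Real.pi * y| = 2 * |y| := by
      rw [abs_mul, abs_of_pos hπ]; field_simp
    rwa [e] at hj
  have : |y| < δ / 16 := by linarith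
  rwa [hy] at this

/-- For `δ ∈ (0,1)`, the set
`𝑃̃ = { k ∈ ℕ : |∫₀^δ sin(kπt) dt| < δ²/(32πk) }` has upper density at most `δ/2`. -/
theorem upperDensity_small_sine_integral_le
    (δ : ℝ) (hδ : δ ∈ Set.Ioo (0:ℝ) 1) :
    upperDensity {k : ℕ | 0 < k ∧
        |∫ t in (0:ℝ)..δ, Real.sin (k * Real.pi * t)| < δ ^ 2 / (32 * Real.pi * k)} ≤ δ / 2 := by
  obtain ⟨hδ0, hδ1⟩ := hδ
  set S : Set ℕ := {k : ℕ | 0 < k ∧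
      |∫ t in (0:ℝ)..δ, Real.sin (k * Real.pi * t)| < δ ^ 2 / (32 * Real.pi * k)} with hS
  set F : ℝ → ℝ := fun r =>
    (Nat.card {k : ℕ | k ∈ S ∧ 0 < (k : ℝ) ∧ (k : ℝ) < r} : ℝ) / r with hF
  -- counting bound
  have hcount : ∀ r : ℝ, 0 < r →
      (Nat.card {k : ℕ | k ∈ S ∧ 0 < (k : ℝ) ∧ (k : ℝ) < r} : ℝ) ≤ r * δ / 2 + 2 := by
    intro r hr
    set N : ℕ := ⌈r * δ / 2⌉₊ with hN
    have hround : ∀ k : ℕ, k ∈ S → |(k:ℝ) * δ / 2 - round ((k:ℝ) * δ / 2)| < δ / 16 := by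
      intro k hk
      exact key_round δ hδ0 hδ1 k hk.1 hk.2
    have hcard : Nat.card {k : ℕ | k ∈ S ∧ 0 < (k : ℝ) ∧ (k : ℝ) < r} ≤ N + 1 := by
      rw [Nat.card_coe_set_eq]
      have := Set.ncard_le_ncard_of_injOn
        (fun k : ℕ => (round ((k:ℝ) * δ / 2)).toNat)
        (s := {k : ℕ | k ∈ S ∧ 0 < (k : ℝ) ∧ (k : ℝ) < r})
        (t := ↑(Finset.range (N + 1)))
        ?_ ?_ (Finset.finite_toSet _)
      · rwa [Set.ncard_coe_finset, Finset.card_range] at this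
      · -- maps to
        rintro k ⟨hkS, hk0, hkr⟩
        simp only [Finset.coe_range, Set.mem_Iio]
        have h1 : (round ((k:ℝ) * δ / 2) : ℝ) ≤ (k:ℝ) * δ / 2 + 1 / 2 := by
          have := abs_sub_round ((k:ℝ) * δ / 2)
          rw [abs_le] at this
          linarith [this.1]
        have h2 : (k:ℝ) * δ / 2 < r * δ / 2 := by nlinarith
        have h3 : r * δ / 2 ≤ (N:ℝ) := Nat.le_ceil _
        have h4 : (round ((k:ℝ) * δ / 2) : ℝ) < (N:ℝ) + 1 := by linarith
        have h5 : round ((k:ℝ) * δ / 2) < (N:ℤ) + 1 := by exact_mod_cast h4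
        omega
      · -- injective
        rintro k₁ ⟨hk₁S, hk₁0, hk₁r⟩ k₂ ⟨hk₂S, hk₂0, hk₂r⟩ heq
        simp only at heq
        have hr₁ : (0:ℤ) ≤ round ((k₁:ℝ) * δ / 2) := by
          have := abs_sub_round ((k₁:ℝ) * δ / 2)
          rw [abs_le] at this
          have hge : ((-1:ℤ):ℝ) < (round ((k₁:ℝ) * δ / 2) : ℝ) := by
            push_cast
            nlinarith [this.2, Nat.cast_nonneg (α := ℝ) k₁, hδ0.le]
          have : (-1:ℤ) < round ((k₁:ℝ) * δ / 2) := by exact_mod_cast hge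
          omega
        have hr₂ : (0:ℤ) ≤ round ((k₂:ℝ) * δ / 2) := by
          have := abs_sub_round ((k₂:ℝ) * δ / 2)
          rw [abs_le] at this
          have hge : ((-1:ℤ):ℝ) < (round ((k₂:ℝ) * δ / 2) : ℝ) := by
            push_cast
            nlinarith [this.2, Nat.cast_nonneg (α := ℝ) k₂, hδ0.le]
          have : (-1:ℤ) < round ((k₂:ℝ) * δ / 2) := by exact_mod_cast hge
          omega
        have hmeq : round ((k₁:ℝ) * δ / 2) = round ((k₂:ℝ) * δ / 2) := by omega
        have e1 := hround k₁ hk₁S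
        have e2 := hround k₂ hk₂S
        rw [abs_lt] at e1 e2
        rw [hmeq] at e1
        have hlt : |(k₁:ℝ) - (k₂:ℝ)| < 1 := by
          rw [abs_lt]
          constructor <;> nlinarith [e1.1, e1.2, e2.1, e2.2]
        rw [abs_lt] at hlt
        have c1 : (k₁:ℝ) < (k₂:ℝ) + 1 := by linarith
        have c2 : (k₂:ℝ) < (k₁:ℝ) + 1 := by linarith
        have c1' : k₁ < k₂ + 1 := by exact_mod_cast c1
        have c2' : k₂ < k₁ + 1 := by exact_mod_cast c2
        omega
    have hN2 : (N:ℝ) < r * δ / 2 + 1 := Nat.ceil_lt_add_one (by positivity)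
    calc (Nat.card {k : ℕ | k ∈ S ∧ 0 < (k : ℝ) ∧ (k : ℝ) < r} : ℝ)
        ≤ ((N:ℝ) + 1) := by exact_mod_cast hcard
      _ ≤ r * δ / 2 + 2 := by linarith
  -- eventual bound on F
  have hev : ∀ᶠ r : ℝ in atTop, F r ≤ δ / 2 + 2 / r := by
    filter_upwards [eventually_gt_atTop (0:ℝ)] with r hr
    have h1 := hcount r hr
    have : F r ≤ (r * δ / 2 + 2) / r := by
      simp only [hF]
      gcongr
    calc F r ≤ (r * δ / 2 + 2) / r := this
      _ = δ / 2 + 2 / r := by field_simp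
  have hFnn : ∀ᶠ r : ℝ in atTop, (0:ℝ) ≤ F r := by
    filter_upwards [eventually_gt_atTop (0:ℝ)] with r hr
    exact div_nonneg (Nat.cast_nonneg _) hr.le
  have hG : Tendsto (fun r : ℝ => δ / 2 + 2 / r) atTop (nhds (δ / 2)) := by
    have h2 : Tendsto (fun r : ℝ => 2 / r) atTop (nhds 0) :=
      tendsto_const_nhds.div_atTop tendsto_id
    simpa using tendsto_const_nhds.add h2
  have hle : limsup F atTop ≤ limsup (fun r : ℝ => δ / 2 + 2 / r) atTop :=
    limsup_le_limsup hev (isCoboundedUnder_le_of_eventually_le atTop hFnn)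
      hG.isBoundedUnder_le
  rw [hG.limsup_eq] at hle
  exact hle
end

section
/- Let δ ∈ (0,1) and let k be a positive integer such that |sin(kπδ/2)| < δ/8. Then there exists a positive integer n such that 2n/δ − 1/(2π) < k < 2n/δ + 1/(2π). -/
/-- If `δ ∈ (0,1)` and `k` is a positive integer with
`|sin(kπδ/2)| < δ/8`, then there is a positive integer `n` with
`2n/δ − 1/(2π) < k < 2n/δ + 1/(2π)`. -/
theorem small_sine_forces_near_lattice
    (δ : ℝ) (hδ : δ ∈ Set.Ioo (0:ℝ) 1) (k : ℕ) (hk : 0 < k)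
    (h : |Real.sin (k * Real.pi * δ / 2)| < δ / 8) :
    ∃ n : ℕ, 0 < n ∧
      2 * n / δ - 1 / (2 * Real.pi) < (k : ℝ) ∧
      (k : ℝ) < 2 * n / δ + 1 / (2 * Real.pi) := by
  obtain ⟨hδ0, hδ1⟩ := hδ
  have hπ := Real.pi_pos
  obtain ⟨m, hm⟩ : ∃ m : ℤ, m = round ((k : ℝ) * δ / 2) := ⟨_, rfl⟩
  obtain ⟨u, hu⟩ : ∃ u : ℝ, u = (k : ℝ) * δ / 2 - m := ⟨_, rfl⟩
  have hub : |u| ≤ 1 / 2 := by rw [hu, hm]; exact abs_sub_round _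
  have hsin : |Real.sin ((k : ℝ) * Real.pi * δ / 2)| = |Real.sin (Real.pi * u)| := by
    have heq : (k : ℝ) * Real.pi * δ / 2 = Real.pi * u + m * Real.pi := by
      rw [hu]; ring
    have habs1 : |((-1 : ℝ)) ^ m| = 1 := by
      rcases Int.even_or_odd m with he | ho
      · rw [he.neg_one_zpow, abs_one]
      · rw [ho.neg_one_zpow, abs_neg, abs_one]
    rw [heq, Real.sin_add_int_mul_pi, abs_mul, habs1, one_mul]
  -- Jordan's inequality: 2 * |u| ≤ |sin (π u)|
  have hjordan : 2 * |u| ≤ |Real.sin (Real.pi * u)| := by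
    have h1 : |Real.sin (Real.pi * u)| = Real.sin (Real.pi * |u|) := by
      rcases abs_cases u with ⟨he, _⟩ | ⟨he, hneg⟩
      · rw [he, abs_of_nonneg]
        apply Real.sin_nonneg_of_nonneg_of_le_pi
        · positivity
        · nlinarith [abs_nonneg u]
      · have hsneg : Real.sin (Real.pi * u) ≤ 0 := by
          have h2 : Real.sin (Real.pi * u) = - Real.sin (Real.pi * (-u)) := by
            rw [mul_neg, Real.sin_neg]; ring
          have h3 : 0 ≤ Real.sin (Real.pi * (-u)) := by
            apply Real.sin_nonneg_of_nonneg_of_le_pi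
            · nlinarith
            · nlinarith [abs_nonneg u, neg_le_abs u]
          linarith
        rw [abs_of_nonpos hsneg, he, mul_neg, Real.sin_neg]
    rw [h1]
    have hjd := Real.mul_le_sin (x := Real.pi * |u|) (by positivity)
      (by nlinarith [abs_nonneg u])
    have heq : 2 * |u| = 2 / Real.pi * (Real.pi * |u|) := by
      field_simp
    linarith [heq ▸ hjd]
  have hu16 : |u| < δ / 16 := by
    rw [hsin] at h; linarith
  -- m is positive
  have hm1 : 1 ≤ m := by
    by_contra hcon
    push_neg at hcon
    have hm0 : (m : ℝ) ≤ 0 := by exact_mod_cast Int.lt_add_one_iff.mp (by omega)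
    have hk1 : (1 : ℝ) ≤ k := by exact_mod_cast hk
    have h2 : δ / 2 ≤ u := by rw [hu]; nlinarith
    have h3 := le_abs_self u
    linarith
  have hmn : ((m.toNat : ℕ) : ℝ) = (m : ℝ) := by
    exact_mod_cast Int.toNat_of_nonneg (by omega)
  have habs := abs_lt.mp hu16
  have hπ4 : Real.pi < 4 := by nlinarith [Real.pi_lt_d2]
  have h2π : (1 : ℝ) / 8 < 1 / (2 * Real.pi) := by
    rw [div_lt_div_iff₀ (by norm_num) (by positivity)]
    nlinarith
  have key : |(k : ℝ) - 2 * m / δ| < 1 / 8 := by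
    have heq : (k : ℝ) - 2 * m / δ = 2 * u / δ := by
      rw [hu]; field_simp
    rw [heq, abs_div, abs_of_pos hδ0, div_lt_iff₀ hδ0, abs_mul]
    simp only [abs_two]
    nlinarith
  have hkey := abs_lt.mp key
  refine ⟨m.toNat, by omega, ?_, ?_⟩
  · rw [hmn]; linarith
  · rw [hmn]; linarith
end
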